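/- arXiv:2503.09298 — 5 statements merged into one kernel-verified Lean document; each statement's English description precedes it below -/
import Mathlib

section
/- For every dimension d ≥ 1 and every α ∈ (0,1), there exists a constant C = C(d, α) > 0 such that for every continuously differentiable integrable function u : ℝ^d → ℝ with ∫|∇u| < ∞, the Gagliardo seminorm satisfies ∫∫ |u(x) - u(y)| / |x - y|^(d+1-α) dx dy ≤ C (∫ |∇u|)^(1-α) (∫ |u|)^α. -/
open MeasureTheory Filter

/-- The Gagliardo `W^{1-α,1}` seminorm of `u : ℝ^d → ℝ`, as an extended real. -/
noncomputable def gagliardo (d : ℕ) (α : ℝ) (u : EuclideanSpace ℝ (Fin d) → ℝ) : ENNReal :=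
  ∫⁻ x, ∫⁻ y, ENNReal.ofReal (|u x - u y| / ‖x - y‖ ^ ((d : ℝ) + 1 - α))

/-!
Substituting `y = x + h`, the seminorm becomes `∫ ω(h) ‖h‖^{-(d+1-α)} dh` with
`ω(h) = ∫ |u(x + h) - u(x)| dx`. The fundamental theorem of calculus along segments gives
`ω(h) ≤ ‖h‖ ∫|∇u|`, the triangle inequality gives `ω(h) ≤ 2 ∫|u|`. Using the first bound on the
ball of radius `2 ∫|u| / ∫|∇u|` and the second outside it, integration in polar coordinates bounds
each piece by a multiple of `(∫|∇u|)^{1-α} (∫|u|)^α`.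
-/

open Metric Set Module
open scoped ENNReal

namespace MeasureTheory

section

variable {E : Type*} [NormedAddCommGroup E] [NormedSpace ℝ E] [FiniteDimensional ℝ E]
  [MeasurableSpace E] [BorelSpace E] [Nontrivial E] (μ : Measure E) [μ.IsAddHaarMeasure]

theorem lintegral_fun_norm_addHaar {f : ℝ → ℝ≥0∞} (hf : Measurable f) :
    ∫⁻ x, f ‖x‖ ∂μ =
      μ.toSphere univ * ∫⁻ r in Ioi 0, ENNReal.ofReal (r ^ (finrank ℝ E - 1)) * f r := by
  have hfm : Measurable fun p : sphere (0 : E) 1 × Ioi (0 : ℝ) => f p.2 :=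
    hf.comp (measurable_subtype_coe.comp measurable_snd)
  calc ∫⁻ x, f ‖x‖ ∂μ = ∫⁻ x : ({0}ᶜ : Set E), f ‖(x : E)‖ ∂μ.comap (↑) := by
        rw [lintegral_subtype_comap (measurableSet_singleton 0).compl fun x => f ‖x‖,
          restrict_compl_singleton]
    _ = ∫⁻ p, f p.2 ∂μ.toSphere.prod (.volumeIoiPow (finrank ℝ E - 1)) := by
        simpa using (μ.measurePreserving_homeomorphUnitSphereProd.lintegral_comp hfm)
    _ = μ.toSphere univ * ∫⁻ r, f r ∂.volumeIoiPow (finrank ℝ E - 1) := by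
        rw [lintegral_prod _ hfm.aemeasurable]
        simp [lintegral_const, mul_comm]
    _ = _ := by
        refine congrArg _ ((lintegral_withDensity_eq_lintegral_mul _ (by fun_prop)
          (hf.comp measurable_subtype_coe)).trans ?_)
        exact lintegral_subtype_comap measurableSet_Ioi
          fun r => ENNReal.ofReal (r ^ (finrank ℝ E - 1)) * f r

theorem setLIntegral_norm_rpow_addHaar {s : Set ℝ} (hs : MeasurableSet s) (p : ℝ) :
    ∫⁻ x in norm ⁻¹' s, ENNReal.ofReal (‖x‖ ^ p) ∂μ =
      μ.toSphere univ * ∫⁻ r in s ∩ Ioi 0, ENNReal.ofReal (r ^ (p + finrank ℝ E - 1)) := by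
  have hn : 1 ≤ finrank ℝ E := finrank_pos
  rw [← lintegral_indicator (measurableSet_preimage measurable_norm hs)]
  have : (norm ⁻¹' s).indicator (fun x : E => ENNReal.ofReal (‖x‖ ^ p))
      = fun x => s.indicator (fun r => ENNReal.ofReal (r ^ p)) ‖x‖ :=
    funext fun x => by by_cases h : ‖x‖ ∈ s <;> simp [h]
  rw [this, lintegral_fun_norm_addHaar μ ((by fun_prop : Measurable _).indicator hs),
    ← Measure.restrict_restrict hs, ← lintegral_indicator hs]
  refine congrArg _ (setLIntegral_congr_fun measurableSet_Ioi fun r (hr : 0 < r) => ?_)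
  by_cases hrs : r ∈ s
  · rw [indicator_of_mem hrs, indicator_of_mem hrs, ← ENNReal.ofReal_mul (by positivity),
      ← Real.rpow_natCast, ← Real.rpow_add hr, Nat.cast_sub hn]
    push_cast
    ring_nf
  · simp [hrs]

theorem lintegral_ball_norm_rpow {p : ℝ} (hp : -(finrank ℝ E : ℝ) < p) {R : ℝ} (hR : 0 < R) :
    ∫⁻ x in ball 0 R, ENNReal.ofReal (‖x‖ ^ p) ∂μ =
      μ.toSphere univ * ENNReal.ofReal (R ^ (p + finrank ℝ E) / (p + finrank ℝ E)) := by
  have hball : ball (0 : E) R = norm ⁻¹' Iio R := by ext; simp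
  have hq : -1 < p + finrank ℝ E - 1 := by linarith
  rw [hball, setLIntegral_norm_rpow_addHaar μ measurableSet_Iio, Iio_inter_Ioi,
    ← ofReal_integral_eq_lintegral_ofReal
      ((intervalIntegral.integrableOn_Ioo_rpow_iff hR).2 hq)
      (ae_restrict_of_forall_mem measurableSet_Ioo fun r hr => Real.rpow_nonneg hr.1.le _),
    ← integral_Ioc_eq_integral_Ioo, ← intervalIntegral.integral_of_le hR.le,
    integral_rpow (Or.inl hq), sub_add_cancel, Real.zero_rpow (by linarith), sub_zero]

theorem lintegral_compl_ball_norm_rpow {p : ℝ} (hp : p < -(finrank ℝ E : ℝ)) {R : ℝ}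
    (hR : 0 < R) :
    ∫⁻ x in (ball 0 R)ᶜ, ENNReal.ofReal (‖x‖ ^ p) ∂μ =
      μ.toSphere univ * ENNReal.ofReal (R ^ (p + finrank ℝ E) / -(p + finrank ℝ E)) := by
  have hball : (ball (0 : E) R)ᶜ = norm ⁻¹' Ici R := by ext; simp
  have hq : p + finrank ℝ E - 1 < -1 := by linarith
  rw [hball, setLIntegral_norm_rpow_addHaar μ measurableSet_Ici,
    inter_eq_left.2 (Ici_subset_Ioi.2 hR),
    ← restrict_Ioi_eq_restrict_Ici,
    ← ofReal_integral_eq_lintegral_ofReal (integrableOn_Ioi_rpow_of_lt hq hR)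
      (ae_restrict_of_forall_mem measurableSet_Ioi fun r (hr : R < r) =>
        Real.rpow_nonneg (hR.trans hr).le _),
    integral_Ioi_rpow_of_lt hq hR, sub_add_cancel, neg_div, div_neg]

theorem lintegral_mul_inv_norm_rpow_le {ω : E → ℝ≥0∞} {A B α : ℝ} (hA : 0 ≤ A) (hB : 0 ≤ B)
    (hα : α ∈ Ioo 0 1) (hωA : ∀ h, ω h ≤ ENNReal.ofReal (A * ‖h‖))
    (hωB : ∀ h, ω h ≤ ENNReal.ofReal B) :
    ∫⁻ h, ω h * ENNReal.ofReal ((‖h‖ ^ ((finrank ℝ E : ℝ) + 1 - α))⁻¹) ∂μ ≤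
      ENNReal.ofReal (μ.toSphere.real univ * (1 / α + 1 / (1 - α)) * A ^ (1 - α) * B ^ α) := by
  obtain ⟨hα0, hα1⟩ := hα
  have hn : (1 : ℝ) ≤ finrank ℝ E := Nat.one_le_cast.2 finrank_pos
  rcases hA.eq_or_lt with rfl | hA
  · have hω : ∀ h, ω h = 0 := fun h => nonpos_iff_eq_zero.1 ((hωA h).trans_eq (by simp))
    simp [hω]
  rcases hB.eq_or_lt with rfl | hB
  · have hω : ∀ h, ω h = 0 := fun h => nonpos_iff_eq_zero.1 ((hωB h).trans_eq (by simp))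
    simp [hω]
  -- the radius where the two bounds on `ω` cross
  set r := B / A
  have hr : 0 < r := div_pos hB hA
  have near : ∀ h, ω h * ENNReal.ofReal ((‖h‖ ^ ((finrank ℝ E : ℝ) + 1 - α))⁻¹) ≤
      ENNReal.ofReal A * ENNReal.ofReal (‖h‖ ^ (α - finrank ℝ E)) := fun h => by
    refine (mul_le_mul_left (hωA h) _).trans_eq ?_
    rw [← ENNReal.ofReal_mul hA.le, ← ENNReal.ofReal_mul (by positivity), mul_assoc,
      ← Real.rpow_neg (norm_nonneg _),
      ← Real.rpow_one_add' (norm_nonneg _) (ne_of_lt (by linarith))]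
    ring_nf
  have far : ∀ h, ω h * ENNReal.ofReal ((‖h‖ ^ ((finrank ℝ E : ℝ) + 1 - α))⁻¹) ≤
      ENNReal.ofReal B * ENNReal.ofReal (‖h‖ ^ (α - finrank ℝ E - 1)) := fun h => by
    refine (mul_le_mul_left (hωB h) _).trans_eq ?_
    rw [← Real.rpow_neg (norm_nonneg _)]
    ring_nf
  set σ := μ.toSphere.real univ
  have hσ : μ.toSphere univ = ENNReal.ofReal σ :=
    (ENNReal.ofReal_toReal (measure_ne_top _ _)).symm
  have hAr : A * r ^ α = A ^ (1 - α) * B ^ α := by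
    rw [Real.div_rpow hB.le hA.le, Real.rpow_sub hA, Real.rpow_one]
    field_simp
  have hBr : B * r ^ (α - 1) = A ^ (1 - α) * B ^ α := by
    rw [Real.div_rpow hB.le hA.le, Real.rpow_sub hB, Real.rpow_sub hA, Real.rpow_sub hA,
      Real.rpow_one, Real.rpow_one]
    field_simp
  calc ∫⁻ h, ω h * ENNReal.ofReal ((‖h‖ ^ ((finrank ℝ E : ℝ) + 1 - α))⁻¹) ∂μ
      = (∫⁻ h in ball 0 r, ω h * ENNReal.ofReal ((‖h‖ ^ ((finrank ℝ E : ℝ) + 1 - α))⁻¹) ∂μ) +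
          ∫⁻ h in (ball 0 r)ᶜ, ω h * ENNReal.ofReal ((‖h‖ ^ ((finrank ℝ E : ℝ) + 1 - α))⁻¹) ∂μ :=
        (lintegral_add_compl _ measurableSet_ball).symm
    _ ≤ (∫⁻ h in ball 0 r, ENNReal.ofReal A * ENNReal.ofReal (‖h‖ ^ (α - finrank ℝ E)) ∂μ) +
          ∫⁻ h in (ball 0 r)ᶜ,
            ENNReal.ofReal B * ENNReal.ofReal (‖h‖ ^ (α - finrank ℝ E - 1)) ∂μ :=
        add_le_add (lintegral_mono near) (lintegral_mono far)
    _ = ENNReal.ofReal A * (μ.toSphere univ * ENNReal.ofReal (r ^ α / α)) +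
          ENNReal.ofReal B * (μ.toSphere univ * ENNReal.ofReal (r ^ (α - 1) / (1 - α))) := by
        rw [lintegral_const_mul' _ _ ENNReal.ofReal_ne_top,
          lintegral_const_mul' _ _ ENNReal.ofReal_ne_top,
          lintegral_ball_norm_rpow μ (by linarith) hr,
          lintegral_compl_ball_norm_rpow μ (by linarith) hr]
        ring_nf
    _ = ENNReal.ofReal (σ / α * (A * r ^ α) + σ / (1 - α) * (B * r ^ (α - 1))) := by
        have hσ0 : 0 ≤ σ := ENNReal.toReal_nonneg
        have hα1' : 0 < 1 - α := by linarith
        rw [hσ, ENNReal.ofReal_add (by positivity) (by positivity)]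
        congr 1 <;>
          rw [← ENNReal.ofReal_mul hσ0, ← ENNReal.ofReal_mul (by positivity)] <;>
          congr 1 <;> ring
    _ = _ := by
        rw [hAr, hBr]
        ring_nf

end

theorem lintegral_enorm_comp_add_right_sub_le_two_mul {G F : Type*} [AddGroup G]
    [MeasurableSpace G] [MeasurableAdd G] {μ : Measure G} [μ.IsAddRightInvariant]
    [NormedAddCommGroup F] {u : G → F} (hu : AEStronglyMeasurable u μ) (h : G) :
    ∫⁻ x, ‖u (x + h) - u x‖ₑ ∂μ ≤ 2 * ∫⁻ x, ‖u x‖ₑ ∂μ :=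
  calc ∫⁻ x, ‖u (x + h) - u x‖ₑ ∂μ ≤ ∫⁻ x, ‖u (x + h)‖ₑ + ‖u x‖ₑ ∂μ :=
        lintegral_mono fun x => enorm_sub_le
    _ = (∫⁻ x, ‖u (x + h)‖ₑ ∂μ) + ∫⁻ x, ‖u x‖ₑ ∂μ := lintegral_add_right' _ hu.enorm
    _ = 2 * ∫⁻ x, ‖u x‖ₑ ∂μ := by
        rw [lintegral_add_right_eq_self (fun x => ‖u x‖ₑ) h, two_mul]

section

variable {E F : Type*} [NormedAddCommGroup E] [NormedSpace ℝ E] [NormedAddCommGroup F]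
  [NormedSpace ℝ F] {u : E → F}

theorem enorm_comp_add_sub_le_lintegral_fderiv (hu : ContDiff ℝ 1 u) (x h : E) :
    ‖u (x + h) - u x‖ₑ ≤ ∫⁻ t in Icc (0 : ℝ) 1, ‖fderiv ℝ u (x + t • h)‖ₑ * ‖h‖ₑ := by
  have hγ : ContDiff ℝ 1 fun t : ℝ => u (x + t • h) := hu.comp (by fun_prop)
  have hderiv : ∀ t : ℝ, deriv (fun t : ℝ => u (x + t • h)) t = fderiv ℝ u (x + t • h) h := by
    intro t
    have hline : HasDerivAt (fun t : ℝ => x + t • h) h t := by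
      simpa using ((hasDerivAt_id t).smul_const h).const_add x
    exact ((hu.differentiable one_ne_zero _).hasFDerivAt.comp_hasDerivAt t hline).deriv
  calc ‖u (x + h) - u x‖ₑ = ‖u (x + (1 : ℝ) • h) - u (x + (0 : ℝ) • h)‖ₑ := by simp
    _ ≤ ∫⁻ t in Icc (0 : ℝ) 1, ‖deriv (fun t : ℝ => u (x + t • h)) t‖ₑ :=
        enorm_sub_le_lintegral_deriv_of_contDiffOn_Icc hγ.contDiffOn zero_le_one
    _ ≤ _ := lintegral_mono fun t => by
        rw [hderiv]
        exact (fderiv ℝ u (x + t • h)).le_opENorm h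

variable [MeasurableSpace E] [BorelSpace E] {μ : Measure E}
  [SFinite μ] [μ.IsAddRightInvariant]

theorem lintegral_enorm_comp_add_right_sub_le_fderiv (hu : ContDiff ℝ 1 u) (h : E) :
    ∫⁻ x, ‖u (x + h) - u x‖ₑ ∂μ ≤ ‖h‖ₑ * ∫⁻ x, ‖fderiv ℝ u x‖ₑ ∂μ := by
  have hmeas :
      Measurable (Function.uncurry fun x (t : ℝ) => ‖fderiv ℝ u (x + t • h)‖ₑ * ‖h‖ₑ) :=
    ((hu.continuous_fderiv one_ne_zero).comp (by fun_prop)).enorm.measurable.mul_const _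
  calc ∫⁻ x, ‖u (x + h) - u x‖ₑ ∂μ
      ≤ ∫⁻ x, (∫⁻ t in Icc (0 : ℝ) 1, ‖fderiv ℝ u (x + t • h)‖ₑ * ‖h‖ₑ) ∂μ :=
        lintegral_mono (enorm_comp_add_sub_le_lintegral_fderiv hu · h)
    _ = ∫⁻ t in Icc (0 : ℝ) 1, ∫⁻ x, ‖fderiv ℝ u (x + t • h)‖ₑ * ‖h‖ₑ ∂μ :=
        lintegral_lintegral_swap hmeas.aemeasurable
    _ = ∫⁻ t in Icc (0 : ℝ) 1, (∫⁻ x, ‖fderiv ℝ u x‖ₑ ∂μ) * ‖h‖ₑ := by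
        refine congrArg _ (funext fun t => ?_)
        rw [lintegral_mul_const' _ _ enorm_ne_top,
          lintegral_add_right_eq_self (fun x => ‖fderiv ℝ u x‖ₑ) (t • h)]
    _ = ‖h‖ₑ * ∫⁻ x, ‖fderiv ℝ u x‖ₑ ∂μ := by simp [mul_comm]

end

end MeasureTheory

theorem gagliardo_eq_lintegral_translate {d : ℕ} {α : ℝ} {u : EuclideanSpace ℝ (Fin d) → ℝ}
    (hu : Measurable u) :
    gagliardo d α u = ∫⁻ h, (∫⁻ x, ‖u (x + h) - u x‖ₑ) *
      ENNReal.ofReal ((‖h‖ ^ ((d : ℝ) + 1 - α))⁻¹) := by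
  have hmeas : Measurable (Function.uncurry fun x h : EuclideanSpace ℝ (Fin d) =>
      ENNReal.ofReal (|u x - u (x + h)| / ‖h‖ ^ ((d : ℝ) + 1 - α))) :=
    (((hu.comp measurable_fst).sub (hu.comp (measurable_fst.add measurable_snd))).abs.div
      (measurable_snd.norm.pow_const _)).ennreal_ofReal
  calc gagliardo d α u
      = ∫⁻ x, ∫⁻ h, ENNReal.ofReal (|u x - u (x + h)| / ‖h‖ ^ ((d : ℝ) + 1 - α)) := by
        refine lintegral_congr fun x => ?_
        rw [← lintegral_add_left_eq_self _ x]
        simp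
    _ = ∫⁻ h, ∫⁻ x, ENNReal.ofReal (|u x - u (x + h)| / ‖h‖ ^ ((d : ℝ) + 1 - α)) :=
        lintegral_lintegral_swap hmeas.aemeasurable
    _ = _ := by
        refine lintegral_congr fun h => ?_
        have split : ∀ x, ENNReal.ofReal (|u x - u (x + h)| / ‖h‖ ^ ((d : ℝ) + 1 - α)) =
            ‖u (x + h) - u x‖ₑ * ENNReal.ofReal ((‖h‖ ^ ((d : ℝ) + 1 - α))⁻¹) := fun x => by
          rw [div_eq_mul_inv, ENNReal.ofReal_mul (abs_nonneg _), abs_sub_comm,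
            Real.enorm_eq_ofReal_abs]
        simp_rw [split]
        exact lintegral_mul_const' _ _ ENNReal.ofReal_ne_top

theorem stmt0 (d : ℕ) (hd : 1 ≤ d) (α : ℝ) (hα : α ∈ Set.Ioo (0 : ℝ) 1) :
    ∃ C > (0 : ℝ), ∀ u : EuclideanSpace ℝ (Fin d) → ℝ,
      ContDiff ℝ 1 u → Integrable u → Integrable (fun x => ‖fderiv ℝ u x‖) →
      gagliardo d α u ≤
        ENNReal.ofReal
          (C * (∫ x, ‖fderiv ℝ u x‖) ^ (1 - α) * (∫ x, |u x|) ^ α) := by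
  have : Nontrivial (EuclideanSpace ℝ (Fin d)) := by
    have : Nonempty (Fin d) := ⟨⟨0, hd⟩⟩
    infer_instance
  set σ := (volume : Measure (EuclideanSpace ℝ (Fin d))).toSphere.real univ
  have hσ : 0 < σ := ENNReal.toReal_pos
    (Measure.measure_univ_ne_zero.2 (Measure.toSphere_ne_zero _)) (measure_ne_top _ _)
  have hα1 : 0 < 1 - α := by linarith [hα.2]
  refine ⟨σ * (1 / α + 1 / (1 - α)) * 2 ^ α, by have := hα.1; positivity,
    fun u hu hu_int hDu_int => ?_⟩
  set I := ∫ x, ‖fderiv ℝ u x‖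
  set J := ∫ x, |u x|
  have hI : ∫⁻ x, ‖fderiv ℝ u x‖ₑ = ENNReal.ofReal I :=
    (ofReal_integral_norm_eq_lintegral_enorm ((integrable_norm_iff
      (hu.continuous_fderiv one_ne_zero).aestronglyMeasurable).1 hDu_int)).symm
  have hJ : ∫⁻ x, ‖u x‖ₑ = ENNReal.ofReal J :=
    (ofReal_integral_norm_eq_lintegral_enorm hu_int).symm
  have hωA : ∀ h, ∫⁻ x, ‖u (x + h) - u x‖ₑ ≤ ENNReal.ofReal (I * ‖h‖) := fun h =>
    (lintegral_enorm_comp_add_right_sub_le_fderiv hu h).trans_eq <| by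
      rw [hI, ← ofReal_norm, ← ENNReal.ofReal_mul (norm_nonneg h), mul_comm]
  have hωB : ∀ h, ∫⁻ x, ‖u (x + h) - u x‖ₑ ≤ ENNReal.ofReal (2 * J) := fun h =>
    (lintegral_enorm_comp_add_right_sub_le_two_mul hu.continuous.aestronglyMeasurable h).trans_eq
      <| by rw [hJ, ENNReal.ofReal_mul zero_le_two, ENNReal.ofReal_ofNat]
  have key := lintegral_mul_inv_norm_rpow_le volume (integral_nonneg fun x => norm_nonneg _)
    (mul_nonneg zero_le_two (integral_nonneg fun x => abs_nonneg (u x))) hα hωA hωB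
  rw [finrank_euclideanSpace_fin] at key
  rw [gagliardo_eq_lintegral_translate hu.continuous.measurable]
  refine key.trans_eq (congrArg _ ?_)
  rw [Real.mul_rpow zero_le_two (integral_nonneg fun x => abs_nonneg (u x))]
  ring
end

section
/- Fix α ∈ (0,1) and a function u ∈ L¹(ℝ^d) supported in the unit cube [0,1]^d with finite Gagliardo W^{1-α,1} seminorm. For each integer k ≥ 0 let v_k be the conditional expectation of u on the dyadic cubes of side 2^{-k} (i.e. v_k is constant on each dyadic k-cube, equal to the average of u there), and set u_0 = v_0 and u_k = v_k - v_{k-1} for k ≥ 1. Then there is a constant C = C(d,α) such that Σ_{k=1}^∞ 2^{(1-α)k} ‖u_k‖₁ ≤ C ∫∫ |u(x)-u(y)|/|x-y|^{d+1-α} dx dy. -/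
/-!
Write `Q_k(x)` for the dyadic `k`-cube containing `x` and `s = d + 1 - α`. Since
`Q_{k+1}(x) ⊆ Q_k(x)`, the difference of the averages of `u` over these two cubes is an average of
`u y - u z` over `Q_{k+1}(x) × Q_k(x)`, whence
`|v_{k+1}(x) - v_k(x)| ≤ 2^{(2k+1)d} ∫_{Q_k(x)} ∫_{Q_k(x)} |u y - u z|`.
Integrating in `x`, a pair `(y, z)` lying in a common `k`-cube is counted on a cube of volume
`2^{-kd}`, so `2^{(1-α)(k+1)} ‖v_{k+1} - v_k‖₁ ≤ 2^{s(k+1)} ∫∫_{z ∈ Q_k(y)} |u y - u z|`.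
Finally `z ∈ Q_k(y)` forces `2^k |y - z| ≤ √d`, so the geometric series
`∑_k 2^{s(k+1)} 1[z ∈ Q_k(y)]` is at most `(4√d / |y - z|)^s`, which gives `C = (4√d)^s`.
-/

open MeasureTheory Filter
open scoped ENNReal

/-- The unit cube `[0,1]^d`. -/
def unitCube (d : ℕ) : Set (EuclideanSpace ℝ (Fin d)) :=
  {x | ∀ i, x i ∈ Set.Icc (0 : ℝ) 1}

/-- `dyadicAvg d u k x` is the average of `u` over the (half-open) dyadic cube of side
`2^{-k}` containing `x`, i.e. the conditional expectation of `u` on dyadic `k`-cubes. -/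
noncomputable def dyadicAvg (d : ℕ) (u : EuclideanSpace ℝ (Fin d) → ℝ) (k : ℕ)
    (x : EuclideanSpace ℝ (Fin d)) : ℝ :=
  (2 : ℝ) ^ (k * d) *
    ∫ y in {y : EuclideanSpace ℝ (Fin d) |
      ∀ i, ⌊(2 : ℝ) ^ k * y i⌋ = ⌊(2 : ℝ) ^ k * x i⌋}, u y

theorem setIntegral_setIntegral_sub {X : Type*} [MeasurableSpace X] {μ : Measure X} {A B : Set X}
    {g : X → ℝ} (hgA : IntegrableOn g A μ) (hgB : IntegrableOn g B μ) (hA : μ A ≠ ∞)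
    (hB : μ B ≠ ∞) :
    ∫ y in A, ∫ z in B, (g y - g z) ∂μ ∂μ =
      μ.real B * (∫ y in A, g y ∂μ) - μ.real A * ∫ z in B, g z ∂μ := by
  have hinner : ∀ y, ∫ z in B, (g y - g z) ∂μ = μ.real B * g y - ∫ z in B, g z ∂μ := fun y => by
    rw [integral_sub (integrableOn_const hB (C := g y)) hgB, setIntegral_const, smul_eq_mul]
  simp_rw [hinner]
  rw [integral_sub (hgA.const_mul _) (integrableOn_const hA), integral_const_mul,
    setIntegral_const, smul_eq_mul]

theorem enorm_measureReal_mul_setIntegral_sub_le {X : Type*} [MeasurableSpace X] {μ : Measure X}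
    {A B : Set X} {g : X → ℝ} (hgA : IntegrableOn g A μ) (hgB : IntegrableOn g B μ)
    (hA : μ A ≠ ∞) (hB : μ B ≠ ∞) :
    ‖μ.real B * (∫ y in A, g y ∂μ) - μ.real A * ∫ z in B, g z ∂μ‖ₑ ≤
      ∫⁻ y in A, ∫⁻ z in B, ‖g y - g z‖ₑ ∂μ ∂μ := by
  rw [← setIntegral_setIntegral_sub hgA hgB hA hB]
  exact (enorm_integral_le_lintegral_enorm _).trans
    (lintegral_mono fun y => enorm_integral_le_lintegral_enorm _)

theorem aemeasurable_enorm_sub {X : Type*} [MeasurableSpace X] {μ : Measure X} [SFinite μ]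
    {u : X → ℝ} (hu : AEMeasurable u μ) :
    AEMeasurable (fun p : X × X => ‖u p.1 - u p.2‖ₑ) (μ.prod μ) :=
  (hu.comp_fst.sub hu.comp_snd).enorm

theorem lintegral_setLIntegral_of_symm {X : Type*} [MeasurableSpace X] {μ : Measure X}
    [SFinite μ] {Q : X → Set X} (hQ : MeasurableSet {p : X × X | p.2 ∈ Q p.1})
    (hsymm : ∀ x y, y ∈ Q x ↔ x ∈ Q y) {c : ℝ≥0∞} (hc : ∀ x, μ (Q x) = c) {H : X → ℝ≥0∞}
    (hH : AEMeasurable H μ) :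
    ∫⁻ x, ∫⁻ y in Q x, H y ∂μ ∂μ = c * ∫⁻ y, H y ∂μ := by
  have hQx : ∀ x, MeasurableSet (Q x) := fun x => measurable_prodMk_left hQ
  calc ∫⁻ x, ∫⁻ y in Q x, H y ∂μ ∂μ
      = ∫⁻ x, ∫⁻ y, {p : X × X | p.2 ∈ Q p.1}.indicator (fun p => H p.2) (x, y) ∂μ ∂μ := by
        congr with x
        rw [← lintegral_indicator (hQx x)]
        rfl
    _ = ∫⁻ y, ∫⁻ x, {p : X × X | p.2 ∈ Q p.1}.indicator (fun p => H p.2) (x, y) ∂μ ∂μ :=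
        lintegral_lintegral_swap (hH.comp_snd.indicator hQ)
    _ = ∫⁻ y, c * H y ∂μ := by
        congr with y
        have : ∀ x, {p : X × X | p.2 ∈ Q p.1}.indicator (fun p => H p.2) (x, y) =
            (Q y).indicator (fun _ => H y) x := fun x => by
          classical
          simp [Set.indicator_apply, hsymm x y]
        simp_rw [this]
        rw [lintegral_indicator_const (hQx y), hc, mul_comm]
    _ = c * ∫⁻ y, H y ∂μ := lintegral_const_mul'' c hH

theorem lintegral_setLIntegral_setLIntegral_of_partition {X : Type*} [MeasurableSpace X]
    {μ : Measure X} [SFinite μ] {Q : X → Set X} (hQ : MeasurableSet {p : X × X | p.2 ∈ Q p.1})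
    (hmem : ∀ x, x ∈ Q x) (hcell : ∀ x y, y ∈ Q x → Q y = Q x) {c : ℝ≥0∞}
    (hc : ∀ x, μ (Q x) = c) {h : X × X → ℝ≥0∞} (hh : AEMeasurable h (μ.prod μ)) :
    ∫⁻ x, ∫⁻ y in Q x, ∫⁻ z in Q x, h (y, z) ∂μ ∂μ ∂μ =
      c * ∫⁻ p in {p : X × X | p.2 ∈ Q p.1}, h p ∂μ.prod μ := by
  have hQx : ∀ x, MeasurableSet (Q x) := fun x => measurable_prodMk_left hQ
  have hsymm : ∀ x y, y ∈ Q x ↔ x ∈ Q y := fun x y =>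
    ⟨fun hy => hcell x y hy ▸ hmem x, fun hx => hcell y x hx ▸ hmem y⟩
  have hcells : ∀ y, ∫⁻ z in Q y, h (y, z) ∂μ =
      ∫⁻ z, {p : X × X | p.2 ∈ Q p.1}.indicator h (y, z) ∂μ := fun y => by
    rw [← lintegral_indicator (hQx y)]
    rfl
  calc ∫⁻ x, ∫⁻ y in Q x, ∫⁻ z in Q x, h (y, z) ∂μ ∂μ ∂μ
      = ∫⁻ x, ∫⁻ y in Q x, ∫⁻ z in Q y, h (y, z) ∂μ ∂μ ∂μ := by
        congr with x
        exact setLIntegral_congr_fun (hQx x) fun y hy => by rw [hcell x y hy]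
    _ = c * ∫⁻ y, ∫⁻ z in Q y, h (y, z) ∂μ ∂μ := by
        refine lintegral_setLIntegral_of_symm hQ hsymm hc ?_
        simp_rw [hcells]
        exact (hh.indicator hQ).lintegral_prod_right'
    _ = c * ∫⁻ p in {p : X × X | p.2 ∈ Q p.1}, h p ∂μ.prod μ := by
        rw [← lintegral_indicator hQ, lintegral_prod _ (hh.indicator hQ)]
        simp_rw [hcells]

theorem norm_le_sqrt_card_mul_of_abs_le {ι : Type*} [Fintype ι] {x : EuclideanSpace ℝ ι} {r : ℝ}
    (hr : 0 ≤ r) (hx : ∀ i, |x i| ≤ r) : ‖x‖ ≤ √(Fintype.card ι) * r := by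
  rw [EuclideanSpace.norm_eq, ← Real.sqrt_sq hr, ← Real.sqrt_mul (Nat.cast_nonneg _)]
  refine Real.sqrt_le_sqrt ?_
  calc ∑ i, ‖x i‖ ^ 2 ≤ ∑ _i : ι, r ^ 2 :=
        Finset.sum_le_sum fun i _ => by
          rw [Real.norm_eq_abs]; exact pow_le_pow_left₀ (abs_nonneg _) (hx i) 2
    _ = Fintype.card ι * r ^ 2 := by simp

theorem sum_range_pow_succ_le {r : ℝ} (hr : 2 ≤ r) (n : ℕ) :
    ∑ k ∈ Finset.range n, r ^ (k + 1) ≤ r ^ (n + 1) := by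
  induction n with
  | zero => simp; positivity
  | succ n ih =>
    rw [Finset.sum_range_succ, pow_succ r (n + 1)]
    nlinarith [pow_pos (by linarith : (0 : ℝ) < r) (n + 1)]

theorem tsum_indicator_two_rpow_le {s M : ℝ} (hs : 1 ≤ s) {S : Set ℕ}
    (hS : ∀ k ∈ S, (2 : ℝ) ^ k ≤ M) :
    ∑' k, S.indicator (fun k : ℕ => ENNReal.ofReal (2 ^ (s * (k + 1)))) k ≤
      ENNReal.ofReal ((4 * M) ^ s) := by
  rcases lt_or_ge M 1 with hM | hM
  · have hSempty : ∀ k, k ∉ S := fun k hk =>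
      (hS k hk).not_gt (hM.trans_le (one_le_pow₀ one_le_two))
    simp [Set.indicator_of_notMem (hSempty _)]
  set K := Nat.log 2 ⌊M⌋₊
  have hK : (2 : ℝ) ^ K ≤ M := calc
    (2 : ℝ) ^ K ≤ ⌊M⌋₊ := by exact_mod_cast Nat.pow_log_le_self 2 (Nat.floor_pos.2 hM).ne'
    _ ≤ M := Nat.floor_le (by linarith)
  have hSK : ∀ k ∈ S, k < K + 1 := fun k hk =>
    Nat.lt_succ_of_le (Nat.le_log_of_pow_le one_lt_two (Nat.le_floor (by exact_mod_cast hS k hk)))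
  have hr : (2 : ℝ) ≤ 2 ^ s := by
    simpa using Real.rpow_le_rpow_of_exponent_le one_le_two hs
  rw [tsum_eq_sum (s := Finset.range (K + 1)) fun k hk =>
    Set.indicator_of_notMem (fun hkS => hk (Finset.mem_range.2 (hSK k hkS))) _]
  calc ∑ k ∈ Finset.range (K + 1), S.indicator (fun k : ℕ => ENNReal.ofReal (2 ^ (s * (k + 1)))) k
      ≤ ∑ k ∈ Finset.range (K + 1), ENNReal.ofReal ((2 ^ s) ^ (k + 1)) :=
        Finset.sum_le_sum fun k _ => (Set.indicator_le_self S _ k).trans_eq (by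
          rw [← Real.rpow_mul_natCast zero_le_two]; push_cast; rfl)
    _ = ENNReal.ofReal (∑ k ∈ Finset.range (K + 1), (2 ^ s) ^ (k + 1)) :=
        (ENNReal.ofReal_sum_of_nonneg fun k _ => by positivity).symm
    _ ≤ ENNReal.ofReal ((2 ^ s) ^ (K + 1 + 1)) :=
        ENNReal.ofReal_le_ofReal (sum_range_pow_succ_le hr _)
    _ ≤ ENNReal.ofReal ((4 * M) ^ s) := by
        refine ENNReal.ofReal_le_ofReal ?_
        rw [← Real.rpow_mul_natCast zero_le_two, mul_comm, Real.rpow_natCast_mul zero_le_two]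
        exact Real.rpow_le_rpow (by positivity) (by rw [pow_succ, pow_succ]; linarith)
          (by linarith)

theorem gagliardo_eq_lintegral_prod (d : ℕ) (α : ℝ) {u : EuclideanSpace ℝ (Fin d) → ℝ}
    (hu : AEMeasurable u) :
    gagliardo d α u = ∫⁻ p : EuclideanSpace ℝ (Fin d) × EuclideanSpace ℝ (Fin d),
      ENNReal.ofReal (|u p.1 - u p.2| / ‖p.1 - p.2‖ ^ ((d : ℝ) + 1 - α)) := by
  rw [gagliardo]
  exact (lintegral_prod _ (ENNReal.measurable_ofReal.comp_aemeasurable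
    ((hu.comp_fst.sub hu.comp_snd).abs.div
      ((measurable_fst.sub measurable_snd).norm.pow_const _).aemeasurable))).symm

namespace DyadicCube

section Geometry

variable {d k : ℕ} {x y : EuclideanSpace ℝ (Fin d)}

def cube (d k : ℕ) (x : EuclideanSpace ℝ (Fin d)) : Set (EuclideanSpace ℝ (Fin d)) :=
  {y | ∀ i, ⌊(2 : ℝ) ^ k * y i⌋ = ⌊(2 : ℝ) ^ k * x i⌋}

def sameCube (d k : ℕ) : Set (EuclideanSpace ℝ (Fin d) × EuclideanSpace ℝ (Fin d)) :=
  {p | p.2 ∈ cube d k p.1}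

theorem mem_cube_self : x ∈ cube d k x := fun _ => rfl

theorem cube_eq_of_mem (h : y ∈ cube d k x) : cube d k y = cube d k x := by
  ext z
  exact forall_congr' fun i => by rw [h i]

theorem cube_succ_subset : cube d (k + 1) x ⊆ cube d k x := by
  intro y hy i
  have halve : ∀ t : ℝ, (2 : ℝ) ^ k * t = (2 ^ (k + 1) * t) / (2 : ℕ) := fun t => by
    push_cast; ring
  rw [halve, halve, Int.floor_div_natCast, Int.floor_div_natCast, hy i]

theorem measurableSet_sameCube : MeasurableSet (sameCube d k) := by
  have hcoord : ∀ i : Fin d, MeasurableSet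
      {p : EuclideanSpace ℝ (Fin d) × EuclideanSpace ℝ (Fin d) |
        ⌊(2 : ℝ) ^ k * p.2 i⌋ = ⌊(2 : ℝ) ^ k * p.1 i⌋} :=
    fun i => measurableSet_eq_fun (by fun_prop) (by fun_prop)
  convert MeasurableSet.iInter hcoord using 1
  ext p
  simp [sameCube, cube]

theorem cube_eq_preimage_pi : cube d k x = (MeasurableEquiv.toLp 2 (Fin d → ℝ)).symm ⁻¹'
    Set.univ.pi fun i =>
      Set.Ico (⌊(2 : ℝ) ^ k * x i⌋ / 2 ^ k) ((⌊(2 : ℝ) ^ k * x i⌋ + 1) / 2 ^ k) := by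
  have h2k : (0 : ℝ) < 2 ^ k := by positivity
  ext y
  simp only [cube, Set.mem_ofPred_eq, Set.mem_preimage, Set.mem_univ_pi, Set.mem_Ico]
  refine forall_congr' fun i => ?_
  rw [Int.floor_eq_iff, div_le_iff₀ h2k, lt_div_iff₀ h2k, mul_comm _ ((2 : ℝ) ^ k)]
  rfl

theorem volume_cube : volume (cube d k x) = ENNReal.ofReal (2 ^ (k * d))⁻¹ := by
  rw [cube_eq_preimage_pi,
    (EuclideanSpace.volume_preserving_symm_measurableEquiv_toLp (Fin d)).measure_preimage
      (MeasurableSet.univ_pi fun _ => measurableSet_Ico).nullMeasurableSet,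
    volume_pi_pi]
  have hside : ∀ a : ℝ, (a + 1) / 2 ^ k - a / 2 ^ k = (2 ^ k)⁻¹ := fun a => by ring
  simp_rw [Real.volume_Ico, hside, Finset.prod_const, Finset.card_univ, Fintype.card_fin,
    ← ENNReal.ofReal_pow (by positivity : (0 : ℝ) ≤ (2 ^ k)⁻¹), inv_pow, ← pow_mul]

theorem volume_cube_ne_top : volume (cube d k x) ≠ ∞ := by
  rw [volume_cube]; exact ENNReal.ofReal_ne_top

theorem measureReal_cube : volume.real (cube d k x) = (2 ^ (k * d))⁻¹ := by
  rw [measureReal_def, volume_cube, ENNReal.toReal_ofReal (by positivity)]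

theorem two_pow_mul_norm_sub_le (h : y ∈ cube d k x) : 2 ^ k * ‖x - y‖ ≤ √d := by
  have h2k : (0 : ℝ) < 2 ^ k := by positivity
  have hcoord : ∀ i, |(x - y) i| ≤ (2 ^ k)⁻¹ := fun i => by
    have := (Int.abs_sub_lt_one_of_floor_eq_floor (h i)).le
    rw [← mul_sub, abs_mul, abs_of_pos h2k] at this
    rw [PiLp.sub_apply, abs_sub_comm, ← one_div, le_div_iff₀ h2k]
    linarith
  calc 2 ^ k * ‖x - y‖ ≤ 2 ^ k * (√d * (2 ^ k)⁻¹) := by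
        gcongr
        simpa using norm_le_sqrt_card_mul_of_abs_le (by positivity) hcoord
    _ = √d := by field_simp

end Geometry

section Estimates

variable {d : ℕ} {u : EuclideanSpace ℝ (Fin d) → ℝ}

theorem dyadicAvg_eq (k : ℕ) (x : EuclideanSpace ℝ (Fin d)) :
    dyadicAvg d u k x = 2 ^ (k * d) * ∫ y in cube d k x, u y :=
  rfl

theorem enorm_dyadicAvg_succ_sub_le (hu : Integrable u) (k : ℕ) (x : EuclideanSpace ℝ (Fin d)) :
    ‖dyadicAvg d u (k + 1) x - dyadicAvg d u k x‖ₑ ≤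
      ENNReal.ofReal (2 ^ ((2 * k + 1) * d)) *
        ∫⁻ y in cube d k x, ∫⁻ z in cube d k x, ‖u y - u z‖ₑ := by
  have hdiff : dyadicAvg d u (k + 1) x - dyadicAvg d u k x =
      2 ^ ((2 * k + 1) * d) * (volume.real (cube d k x) * (∫ y in cube d (k + 1) x, u y) -
        volume.real (cube d (k + 1) x) * ∫ z in cube d k x, u z) := by
    rw [dyadicAvg_eq, dyadicAvg_eq, measureReal_cube, measureReal_cube]
    field_simp
    ring
  rw [hdiff, enorm_mul, Real.enorm_of_nonneg (by positivity)]
  gcongr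
  calc _ ≤ ∫⁻ y in cube d (k + 1) x, ∫⁻ z in cube d k x, ‖u y - u z‖ₑ :=
        enorm_measureReal_mul_setIntegral_sub_le hu.integrableOn hu.integrableOn
          volume_cube_ne_top volume_cube_ne_top
    _ ≤ _ := lintegral_mono_set cube_succ_subset

theorem lintegral_enorm_dyadicAvg_succ_sub_le (hu : Integrable u) (k : ℕ) :
    ∫⁻ x, ‖dyadicAvg d u (k + 1) x - dyadicAvg d u k x‖ₑ ≤
      ENNReal.ofReal (2 ^ ((k + 1) * d)) * ∫⁻ p in sameCube d k, ‖u p.1 - u p.2‖ₑ := by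
  calc ∫⁻ x, ‖dyadicAvg d u (k + 1) x - dyadicAvg d u k x‖ₑ
      ≤ ∫⁻ x, ENNReal.ofReal (2 ^ ((2 * k + 1) * d)) *
          ∫⁻ y in cube d k x, ∫⁻ z in cube d k x, ‖u y - u z‖ₑ :=
        lintegral_mono fun x => enorm_dyadicAvg_succ_sub_le hu k x
    _ = ENNReal.ofReal (2 ^ ((2 * k + 1) * d)) * (ENNReal.ofReal (2 ^ (k * d))⁻¹ *
          ∫⁻ p in sameCube d k, ‖u p.1 - u p.2‖ₑ) := by
        rw [lintegral_const_mul' _ _ ENNReal.ofReal_ne_top,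
          lintegral_setLIntegral_setLIntegral_of_partition measurableSet_sameCube
            (fun _ => mem_cube_self) (fun _ _ => cube_eq_of_mem) (fun _ => volume_cube)
            (aemeasurable_enorm_sub hu.aemeasurable)]
        -- the product measure `volume.prod volume` is `volume` only up to unfolding
        rfl
    _ = _ := by
        rw [← mul_assoc, ← ENNReal.ofReal_mul (by positivity)]
        congr 2
        field_simp
        ring

theorem ofReal_two_rpow_mul_integral_le (hu : Integrable u) (α : ℝ) (k : ℕ) :
    ENNReal.ofReal ((2 : ℝ) ^ ((1 - α) * ((k : ℝ) + 1)) *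
        ∫ x, |dyadicAvg d u (k + 1) x - dyadicAvg d u k x|) ≤
      ENNReal.ofReal (2 ^ (((d : ℝ) + 1 - α) * ((k : ℝ) + 1))) *
        ∫⁻ p in sameCube d k, ‖u p.1 - u p.2‖ₑ := by
  have hint : ENNReal.ofReal (∫ x, |dyadicAvg d u (k + 1) x - dyadicAvg d u k x|) ≤
      ∫⁻ x, ‖dyadicAvg d u (k + 1) x - dyadicAvg d u k x‖ₑ := by
    rw [← Real.enorm_of_nonneg (integral_nonneg fun _ => abs_nonneg _)]
    exact (enorm_integral_le_lintegral_enorm _).trans_eq (by simp_rw [Real.enorm_abs])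
  rw [ENNReal.ofReal_mul (by positivity)]
  calc _ ≤ ENNReal.ofReal ((2 : ℝ) ^ ((1 - α) * ((k : ℝ) + 1))) *
        (ENNReal.ofReal (2 ^ ((k + 1) * d)) * ∫⁻ p in sameCube d k, ‖u p.1 - u p.2‖ₑ) := by
        gcongr
        exact hint.trans (lintegral_enorm_dyadicAvg_succ_sub_le hu k)
    _ = _ := by
        rw [← mul_assoc, ← ENNReal.ofReal_mul (by positivity), ← Real.rpow_natCast,
          ← Real.rpow_add two_pos]
        congr 3
        push_cast
        ring

theorem tsum_mul_indicator_sameCube_le {s : ℝ} (hs : 1 ≤ s)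
    (p : EuclideanSpace ℝ (Fin d) × EuclideanSpace ℝ (Fin d)) :
    ∑' k : ℕ, ENNReal.ofReal (2 ^ (s * (k + 1))) *
        (sameCube d k).indicator (fun q => ‖u q.1 - u q.2‖ₑ) p ≤
      ENNReal.ofReal ((4 * √d) ^ s) * ENNReal.ofReal (|u p.1 - u p.2| / ‖p.1 - p.2‖ ^ s) := by
  obtain ⟨x, y⟩ := p
  rcases eq_or_ne x y with rfl | hxy
  · simp
  have hn : 0 < ‖x - y‖ := norm_pos_iff.2 (sub_ne_zero.2 hxy)
  have hsplit : ∀ k : ℕ, ENNReal.ofReal (2 ^ (s * (k + 1))) *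
      (sameCube d k).indicator (fun q => ‖u q.1 - u q.2‖ₑ) (x, y) =
      {k : ℕ | y ∈ cube d k x}.indicator (fun k : ℕ => ENNReal.ofReal (2 ^ (s * (k + 1)))) k *
        ‖u x - u y‖ₑ := fun k => by
    classical
    simp only [sameCube, Set.indicator_apply, Set.mem_ofPred_eq]
    split_ifs <;> simp
  rw [tsum_congr hsplit, ENNReal.tsum_mul_right]
  calc _ ≤ ENNReal.ofReal ((4 * (√d / ‖x - y‖)) ^ s) * ‖u x - u y‖ₑ := by
        gcongr
        exact tsum_indicator_two_rpow_le hs fun k hk =>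
          (le_div_iff₀ hn).2 (two_pow_mul_norm_sub_le hk)
    _ = _ := by
        rw [Real.enorm_eq_ofReal_abs, ← ENNReal.ofReal_mul (by positivity),
          ← ENNReal.ofReal_mul (by positivity), ← mul_div_assoc,
          Real.div_rpow (by positivity) hn.le, div_mul_eq_mul_div, mul_div_assoc]

theorem tsum_mul_setLIntegral_sameCube_le {α : ℝ} (hs : 1 ≤ (d : ℝ) + 1 - α)
    (hu : AEMeasurable u) :
    ∑' k : ℕ, ENNReal.ofReal (2 ^ (((d : ℝ) + 1 - α) * ((k : ℝ) + 1))) *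
        ∫⁻ p in sameCube d k, ‖u p.1 - u p.2‖ₑ ≤
      ENNReal.ofReal ((4 * √d) ^ ((d : ℝ) + 1 - α)) * gagliardo d α u := by
  have hh : AEMeasurable fun p : EuclideanSpace ℝ (Fin d) × EuclideanSpace ℝ (Fin d) =>
      ‖u p.1 - u p.2‖ₑ := aemeasurable_enorm_sub hu
  calc _ = ∫⁻ p, ∑' k : ℕ, ENNReal.ofReal (2 ^ (((d : ℝ) + 1 - α) * ((k : ℝ) + 1))) *
          (sameCube d k).indicator (fun q => ‖u q.1 - u q.2‖ₑ) p := by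
        rw [lintegral_tsum fun k => (hh.indicator measurableSet_sameCube).const_mul _]
        simp_rw [lintegral_const_mul' _ _ ENNReal.ofReal_ne_top,
          lintegral_indicator measurableSet_sameCube]
    _ ≤ ∫⁻ p, ENNReal.ofReal ((4 * √d) ^ ((d : ℝ) + 1 - α)) *
          ENNReal.ofReal (|u p.1 - u p.2| / ‖p.1 - p.2‖ ^ ((d : ℝ) + 1 - α)) :=
        lintegral_mono fun p => tsum_mul_indicator_sameCube_le hs p
    _ = _ := by
        rw [lintegral_const_mul' _ _ ENNReal.ofReal_ne_top, gagliardo_eq_lintegral_prod d α hu]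

end Estimates

end DyadicCube

open DyadicCube in
theorem stmt2 (d : ℕ) (hd : 1 ≤ d) (α : ℝ) (hα : α ∈ Set.Ioo (0 : ℝ) 1) :
    ∃ C > (0 : ℝ), ∀ u : EuclideanSpace ℝ (Fin d) → ℝ,
      Integrable u → (∀ x, x ∉ unitCube d → u x = 0) →
      gagliardo d α u < ⊤ →
      ∑' k : ℕ, ENNReal.ofReal
          ((2 : ℝ) ^ ((1 - α) * ((k : ℝ) + 1)) *
            ∫ x, |dyadicAvg d u (k + 1) x - dyadicAvg d u k x|) ≤
        ENNReal.ofReal C * gagliardo d α u := by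
  have hd' : (1 : ℝ) ≤ d := by exact_mod_cast hd
  have hs : 1 ≤ (d : ℝ) + 1 - α := by linarith [hα.2]
  refine ⟨(4 * √d) ^ ((d : ℝ) + 1 - α), by positivity, fun u hu _ _ => ?_⟩
  exact (ENNReal.tsum_le_tsum fun k => ofReal_two_rpow_mul_integral_le hu α k).trans
    (tsum_mul_setLIntegral_sameCube_le hs hu.aemeasurable)
end

section
/- Let X be a metric space, K ⊂ X, let 0 < α < β ≤ 1 and κ ≥ 0. Suppose (f_n) is a sequence of real-valued functions on K such that for all n, the β-Hölder seminorm of f_n is at most 2^{-n(α-β)} κ and the sup norm of f_n is at most 2^{-nα} κ. Then the series Σ_{n=0}^∞ f_n converges uniformly on K to an α-Hölder continuous function f with α-Hölder seminorm at most C κ, where C depends only on α and β. -/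
open Filter Finset Real

/-!
Split the series at the dyadic scale `2⁻ᴺ ≈ d = dist x y`. For `n < N` the `β`-Hölder bounds
form a geometric series of ratio `2^(β-α) > 1`, dominated by its last term `≈ d^α`; for `n ≥ N`
the sup bounds form a geometric series of ratio `2^(-α) < 1`, dominated by its first term
`2^(-Nα) ≤ d^α`.
-/

lemma tsum_le_geom_head_add_geom_tail {a : ℕ → ℝ} {r s A B : ℝ} (ha : ∀ n, 0 ≤ a n)
    (hr₀ : 0 ≤ r) (hr₁ : r < 1) (hs : 1 < s) (hhead : ∀ n, a n ≤ s ^ n * A)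
    (htail : ∀ n, a n ≤ r ^ n * B) (N : ℕ) :
    ∑' n, a n ≤ (s ^ N - 1) / (s - 1) * A + r ^ N / (1 - r) * B := by
  have hgeom : Summable fun n => r ^ n * B := (summable_geometric_of_lt_one hr₀ hr₁).mul_right B
  have hsum : Summable a := hgeom.of_nonneg_of_le ha htail
  rw [← hsum.sum_add_tsum_nat_add N]
  gcongr ?_ + ?_
  · calc ∑ n ∈ range N, a n ≤ ∑ n ∈ range N, s ^ n * A := sum_le_sum fun n _ => hhead n
      _ = (s ^ N - 1) / (s - 1) * A := by rw [← sum_mul, geom_sum_eq hs.ne']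
  · have htail' (n : ℕ) : a (n + N) ≤ r ^ N * B * r ^ n := (htail (n + N)).trans_eq (by ring)
    calc ∑' n, a (n + N) ≤ ∑' n, r ^ N * B * r ^ n :=
          (hsum.comp_injective (add_left_injective N)).tsum_le_tsum htail'
            ((summable_geometric_of_lt_one hr₀ hr₁).mul_left _)
      _ = r ^ N / (1 - r) * B := by
          rw [tsum_mul_left, tsum_geometric_of_lt_one hr₀ hr₁]; ring

lemma exists_dyadic_scale {α β d : ℝ} (hα : 0 < α) (hαβ : α < β) (hd : 0 < d) :
    ∃ N : ℕ, (2 ^ (-α)) ^ N ≤ d ^ α ∧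
      ((2 ^ (β - α)) ^ N - 1) * d ^ β ≤ 2 ^ (β - α) * d ^ α := by
  rcases le_or_gt 1 d with hd₁ | hd₁
  · exact ⟨0, by simpa using one_le_rpow hd₁ hα.le, by simp; positivity⟩
  obtain ⟨n, hn, hn'⟩ := exists_nat_pow_near (one_le_inv₀ hd |>.2 hd₁.le) one_lt_two
  set t : ℝ := 2 ^ (n + 1)
  have ht : 0 < t := by positivity
  have hinv_t : t⁻¹ ≤ d := (inv_le_comm₀ ht hd).2 hn'.le
  have htd : t * d ≤ 2 := by
    calc t * d = 2 * (2 ^ n * d) := by ring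
      _ ≤ 2 * (d⁻¹ * d) := by gcongr
      _ = 2 := by rw [inv_mul_cancel₀ hd.ne', mul_one]
  refine ⟨n + 1, ?_, ?_⟩
  · calc (2 ^ (-α)) ^ (n + 1) = t⁻¹ ^ α := by
          rw [rpow_pow_comm zero_le_two, rpow_neg ht.le, inv_rpow ht.le]
      _ ≤ d ^ α := rpow_le_rpow (by positivity) hinv_t hα.le
  · calc ((2 ^ (β - α)) ^ (n + 1) - 1) * d ^ β ≤ t ^ (β - α) * d ^ β := by
          rw [rpow_pow_comm zero_le_two]; gcongr; linarith
      _ = (t * d) ^ (β - α) * d ^ α := by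
          rw [mul_rpow ht.le hd.le, mul_assoc, ← rpow_add hd, sub_add_cancel]
      _ ≤ 2 ^ (β - α) * d ^ α := by gcongr

noncomputable def dyadicHolderConst (α β : ℝ) : ℝ :=
  2 ^ (β - α) / (2 ^ (β - α) - 1) + 2 / (1 - 2 ^ (-α))

lemma dyadicHolderConst_pos {α β : ℝ} (hα : 0 < α) (hαβ : α < β) :
    0 < dyadicHolderConst α β := by
  have hs : 0 < (2 : ℝ) ^ (β - α) - 1 := by linarith [one_lt_rpow one_lt_two (sub_pos.2 hαβ)]
  have hr : 0 < 1 - (2 : ℝ) ^ (-α) := by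
    linarith [rpow_lt_one_of_one_lt_of_neg one_lt_two (neg_neg_of_pos hα)]
  unfold dyadicHolderConst
  positivity

lemma tsum_le_dyadicHolderConst_mul {α β κ d : ℝ} (hα : 0 < α) (hαβ : α < β) (hκ : 0 ≤ κ)
    (hd : 0 ≤ d) {a : ℕ → ℝ} (ha : ∀ n, 0 ≤ a n)
    (hhead : ∀ n, a n ≤ (2 ^ (β - α)) ^ n * (κ * d ^ β))
    (htail : ∀ n, a n ≤ (2 ^ (-α)) ^ n * (2 * κ)) :
    ∑' n, a n ≤ dyadicHolderConst α β * κ * d ^ α := by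
  rcases hd.eq_or_lt with rfl | hd
  · have : ∀ n, a n = 0 := fun n =>
      le_antisymm ((hhead n).trans_eq (by simp [zero_rpow (hα.trans hαβ).ne'])) (ha n)
    simp [this, zero_rpow hα.ne']
  have hs : 1 < (2 : ℝ) ^ (β - α) := one_lt_rpow one_lt_two (sub_pos.2 hαβ)
  have hr : (2 : ℝ) ^ (-α) < 1 := rpow_lt_one_of_one_lt_of_neg one_lt_two (neg_neg_of_pos hα)
  obtain ⟨N, hrN, hsN⟩ := exists_dyadic_scale hα hαβ hd
  calc ∑' n, a n
      ≤ ((2 ^ (β - α)) ^ N - 1) / (2 ^ (β - α) - 1) * (κ * d ^ β)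
          + (2 ^ (-α)) ^ N / (1 - 2 ^ (-α)) * (2 * κ) :=
        tsum_le_geom_head_add_geom_tail ha (by positivity) hr hs hhead htail N
    _ = κ / (2 ^ (β - α) - 1) * (((2 ^ (β - α)) ^ N - 1) * d ^ β)
          + 2 * κ / (1 - 2 ^ (-α)) * (2 ^ (-α)) ^ N := by ring
    _ ≤ κ / (2 ^ (β - α) - 1) * (2 ^ (β - α) * d ^ α) + 2 * κ / (1 - 2 ^ (-α)) * d ^ α := by
        have : 0 < (2 : ℝ) ^ (β - α) - 1 := by linarith
        have : 0 < 1 - (2 : ℝ) ^ (-α) := by linarith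
        gcongr
    _ = dyadicHolderConst α β * κ * d ^ α := by unfold dyadicHolderConst; ring

theorem stmt6_general (α β : ℝ) (hα : 0 < α) (hαβ : α < β) :
    ∃ C > (0 : ℝ), ∀ (X : Type) [inst : MetricSpace X] (K : Set X) (κ : ℝ), 0 ≤ κ →
      ∀ f : ℕ → K → ℝ,
      (∀ (n : ℕ) (x y : K), |f n x - f n y| ≤ 2 ^ (-(n : ℝ) * (α - β)) * κ * dist x y ^ β) →
      (∀ (n : ℕ) (x : K), |f n x| ≤ 2 ^ (-(n : ℝ) * α) * κ) →
      ∃ g : K → ℝ,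
        TendstoUniformly (fun N x => ∑ n ∈ Finset.range N, f n x) g atTop ∧
        ∀ x y : K, |g x - g y| ≤ C * κ * dist x y ^ α := by
  refine ⟨dyadicHolderConst α β, dyadicHolderConst_pos hα hαβ,
    fun X _ K κ hκ f hHol hSup => ?_⟩
  have hpow (n : ℕ) (γ : ℝ) : (2 : ℝ) ^ (-(n : ℝ) * γ) = (2 ^ (-γ)) ^ n := by
    rw [← rpow_mul_natCast zero_le_two]; ring_nf
  have hsup (n : ℕ) (x : K) : ‖f n x‖ ≤ (2 ^ (-α)) ^ n * κ := by
    simpa only [Real.norm_eq_abs, hpow] using hSup n x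
  have hgeom : Summable fun n : ℕ => ((2 : ℝ) ^ (-α)) ^ n * κ :=
    (summable_geometric_of_lt_one (by positivity)
      (rpow_lt_one_of_one_lt_of_neg one_lt_two (neg_neg_of_pos hα))).mul_right κ
  have hsum (x : K) : Summable fun n => f n x := hgeom.of_norm_bounded (hsup · x)
  refine ⟨fun x => ∑' n, f n x, tendstoUniformly_tsum_nat hgeom hsup, fun x y => ?_⟩
  calc |∑' n, f n x - ∑' n, f n y| = ‖∑' n, (f n x - f n y)‖ := by
        rw [(hsum x).tsum_sub (hsum y), Real.norm_eq_abs]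
    _ ≤ ∑' n, ‖f n x - f n y‖ := norm_tsum_le_tsum_norm ((hsum x).sub (hsum y)).norm
    _ ≤ dyadicHolderConst α β * κ * dist x y ^ α := by
        refine tsum_le_dyadicHolderConst_mul hα hαβ hκ dist_nonneg (fun n => norm_nonneg _)
          (fun n => ?_) (fun n => ?_)
        · simpa only [Real.norm_eq_abs, hpow, neg_sub, mul_assoc] using hHol n x y
        · linarith [norm_sub_le (f n x) (f n y), hsup n x, hsup n y]

/-- Littlewood–Paley type lemma, `m = 0` case: a series of functions with sup norms
`≲ 2^{-nα} κ` and `β`-Hölder seminorms `≲ 2^{-n(α-β)} κ` converges uniformly to an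
`α`-Hölder function with seminorm at most `C(α,β) κ`. -/
theorem stmt6 (α β : ℝ) (hα : 0 < α) (hαβ : α < β) (hβ : β ≤ 1) :
    ∃ C > (0 : ℝ), ∀ (X : Type) [inst : MetricSpace X] (K : Set X) (κ : ℝ), 0 ≤ κ →
      ∀ f : ℕ → K → ℝ,
      (∀ (n : ℕ) (x y : K), |f n x - f n y| ≤ 2 ^ (-(n : ℝ) * (α - β)) * κ * dist x y ^ β) →
      (∀ (n : ℕ) (x : K), |f n x| ≤ 2 ^ (-(n : ℝ) * α) * κ) →
      ∃ g : K → ℝ,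
        TendstoUniformly (fun N x => ∑ n ∈ Finset.range N, f n x) g atTop ∧
        ∀ x y : K, |g x - g y| ≤ C * κ * dist x y ^ α :=
  stmt6_general α β hα hαβ
end

section
/- Let m ≤ γ < m+1, m-1 ≤ δ < m, σ, ρ > 1, and let α satisfy max{γ - m, δ - (m-1)} ≤ α ≤ 1. Suppose nonnegative reals M_k^S, M_k^{∂S}, M_k^R, M_k^{∂R} satisfy Σ_k M_k^S σ^{k(m+1-γ)} < ∞, Σ_k M_k^{∂S} σ^{k(m-γ)} < ∞, Σ_k M_k^R ρ^{k(m-δ)} < ∞, and Σ_k M_k^{∂R} ρ^{k(m-1-δ)} < ∞. Then Σ_k (M_k^{∂S})^{1-α} (M_k^S)^α < ∞ and Σ_k (M_k^R + M_k^{∂R})^{1-α} (M_k^R)^α < ∞. -/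
lemma stmt13_cmp (σ : ℝ) (hσ : 1 < σ) (c d : ℝ) (hdc : d ≤ c) (f : ℕ → ℝ)
    (hf : ∀ k, 0 ≤ f k)
    (h : Summable fun k => f k * σ ^ ((k : ℝ) * c)) :
    Summable fun k => f k * σ ^ ((k : ℝ) * d) := by
  have hσ0 : (0 : ℝ) < σ := lt_trans zero_lt_one hσ
  refine h.of_nonneg_of_le
    (fun k => mul_nonneg (hf k) (Real.rpow_nonneg hσ0.le _)) (fun k => ?_)
  exact mul_le_mul_of_nonneg_left
    (Real.rpow_le_rpow_of_exponent_le hσ.le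
      (mul_le_mul_of_nonneg_left hdc (Nat.cast_nonneg k))) (hf k)

lemma stmt13_young (α : ℝ) (hα0 : 0 ≤ α) (hα2 : α ≤ 1) (σ : ℝ) (hσ : 1 < σ)
    (a b : ℕ → ℝ) (ha : ∀ k, 0 ≤ a k) (hb : ∀ k, 0 ≤ b k)
    (hA : Summable fun k => a k * σ ^ ((k : ℝ) * (-α)))
    (hB : Summable fun k => b k * σ ^ ((k : ℝ) * (1 - α))) :
    Summable fun k => a k ^ (1 - α) * b k ^ α := by
  have hσ0 : (0 : ℝ) < σ := lt_trans zero_lt_one hσ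
  refine Summable.of_nonneg_of_le
    (fun k => mul_nonneg (Real.rpow_nonneg (ha k) _) (Real.rpow_nonneg (hb k) _))
    (fun k => ?_) ((hA.mul_left (1 - α)).add (hB.mul_left α))
  have e1 : (σ ^ ((k : ℝ) * (-α))) ^ (1 - α) * (σ ^ ((k : ℝ) * (1 - α))) ^ α = 1 := by
    rw [← Real.rpow_mul hσ0.le, ← Real.rpow_mul hσ0.le, ← Real.rpow_add hσ0]
    rw [show (k : ℝ) * (-α) * (1 - α) + (k : ℝ) * (1 - α) * α = 0 by ring, Real.rpow_zero]
  have key : a k ^ (1 - α) * b k ^ α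
      = (a k * σ ^ ((k : ℝ) * (-α))) ^ (1 - α) * (b k * σ ^ ((k : ℝ) * (1 - α))) ^ α := by
    rw [Real.mul_rpow (ha k) (Real.rpow_nonneg hσ0.le _),
      Real.mul_rpow (hb k) (Real.rpow_nonneg hσ0.le _)]
    rw [mul_mul_mul_comm, e1, mul_one]
  rw [key]
  exact Real.geom_mean_le_arith_mean2_weighted (sub_nonneg.2 hα2) hα0
    (mul_nonneg (ha k) (Real.rpow_nonneg hσ0.le _))
    (mul_nonneg (hb k) (Real.rpow_nonneg hσ0.le _)) (by ring)

/-- Quantitative core of the fact that Züst's `(γ,δ)`-fractal currents are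
`α`-fractional, via the weighted Young inequality. -/
theorem stmt13 (m : ℕ) (γ δ σ ρ α : ℝ)
    (hγ : (m : ℝ) ≤ γ) (hγ' : γ < (m : ℝ) + 1)
    (hδ : (m : ℝ) - 1 ≤ δ) (hδ' : δ < (m : ℝ))
    (hσ : 1 < σ) (hρ : 1 < ρ)
    (hα1 : max (γ - (m : ℝ)) (δ - ((m : ℝ) - 1)) ≤ α) (hα2 : α ≤ 1)
    (MS MdS MR MdR : ℕ → ℝ)
    (hMS : ∀ k, 0 ≤ MS k) (hMdS : ∀ k, 0 ≤ MdS k)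
    (hMR : ∀ k, 0 ≤ MR k) (hMdR : ∀ k, 0 ≤ MdR k)
    (h1 : Summable fun k => MS k * σ ^ ((k : ℝ) * ((m : ℝ) + 1 - γ)))
    (h2 : Summable fun k => MdS k * σ ^ ((k : ℝ) * ((m : ℝ) - γ)))
    (h3 : Summable fun k => MR k * ρ ^ ((k : ℝ) * ((m : ℝ) - δ)))
    (h4 : Summable fun k => MdR k * ρ ^ ((k : ℝ) * ((m : ℝ) - 1 - δ))) :
    (Summable fun k => MdS k ^ (1 - α) * MS k ^ α) ∧
    (Summable fun k => (MR k + MdR k) ^ (1 - α) * MR k ^ α) := by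
  have hαγ : γ - (m : ℝ) ≤ α := le_trans (le_max_left _ _) hα1
  have hαδ : δ - ((m : ℝ) - 1) ≤ α := le_trans (le_max_right _ _) hα1
  have hα0 : 0 ≤ α := le_trans (sub_nonneg.2 hγ) hαγ
  constructor
  · refine stmt13_young α hα0 hα2 σ hσ _ _ hMdS hMS ?_ ?_
    · exact stmt13_cmp σ hσ _ _ (by linarith) MdS hMdS h2
    · exact stmt13_cmp σ hσ _ _ (by linarith) MS hMS h1
  · refine stmt13_young α hα0 hα2 ρ hρ _ _ (fun k => add_nonneg (hMR k) (hMdR k)) hMR ?_ ?_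
    · have hR : Summable fun k => MR k * ρ ^ ((k : ℝ) * (-α)) :=
        stmt13_cmp ρ hρ _ _ (by linarith) MR hMR h3
      have hdR : Summable fun k => MdR k * ρ ^ ((k : ℝ) * (-α)) :=
        stmt13_cmp ρ hρ _ _ (by linarith) MdR hMdR h4
      have := hR.add hdR
      simpa [add_mul] using this
    · exact stmt13_cmp ρ hρ _ _ (by linarith) MR hMR h3
end

section
/- Let 0 < α < β ≤ 1, κ ≥ 0, and let V be a real vector space equipped with two seminorms N and F with F ≤ N. Suppose (ω_n) is a sequence of linear functionals on V such that |ω_n(T)| ≤ 2^{-n(α-β)} κ N(T)^{1-β} F(T)^β and |ω_n(T)| ≤ 2^{-nα} κ N(T) for all T ∈ V and n ≥ 0. Then for every T ∈ V the series Σ_n ω_n(T) converges absolutely and |Σ_{n=0}^∞ ω_n(T)| ≤ C N(T)^{1-α} F(T)^α κ, where C = C(α, β). -/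
open Real Finset

-- choosing the splitting point
lemma split_point {r : ℝ} (hr0 : 0 < r) (hr1 : r ≤ 1) :
    ∃ M : ℕ, (2:ℝ) ^ (-((M:ℝ)+1)) ≤ r ∧ r ≤ 2 ^ (-(M:ℝ)) := by
  set x := Real.logb 2 r⁻¹ with hx
  have hx0 : 0 ≤ x := Real.logb_nonneg one_lt_two (by
    rw [le_inv_comm₀ one_pos hr0]; simpa using hr1)
  refine ⟨⌊x⌋₊, ?_, ?_⟩
  · have h1 : x < (⌊x⌋₊ : ℝ) + 1 := Nat.lt_floor_add_one x
    have h2 : r⁻¹ < (2:ℝ) ^ ((⌊x⌋₊:ℝ)+1) := by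
      rw [← Real.rpow_logb two_pos (by norm_num) (inv_pos.mpr hr0)]
      exact (Real.rpow_lt_rpow_left_iff one_lt_two).mpr h1
    rw [Real.rpow_neg (by norm_num)]
    rw [inv_le_comm₀ (by positivity) hr0] at *
    exact h2.le
  · have h1 : (⌊x⌋₊:ℝ) ≤ x := Nat.floor_le hx0
    have h2 : (2:ℝ) ^ ((⌊x⌋₊:ℝ)) ≤ r⁻¹ := by
      rw [← Real.rpow_logb two_pos (by norm_num) (inv_pos.mpr hr0)]
      exact Real.rpow_le_rpow_left_iff one_lt_two |>.mpr h1
    rw [Real.rpow_neg (by norm_num), le_inv_comm₀ hr0 (by positivity)]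
    exact h2

set_option maxHeartbeats 1000000 in
/-- Abstract Littlewood–Paley type interpolation lemma: linear functionals `ω_n` on a
space with two seminorms `F ≤ N`, satisfying `|ω_n(T)| ≤ 2^{-n(α-β)} κ N(T)^{1-β} F(T)^β`
and `|ω_n(T)| ≤ 2^{-nα} κ N(T)`, sum to a functional bounded by
`C(α,β) N(T)^{1-α} F(T)^α κ`. -/
theorem stmt15 (α β : ℝ) (hα : 0 < α) (hαβ : α < β) (hβ : β ≤ 1) :
    ∃ C > (0 : ℝ), ∀ (V : Type) [inst : AddCommGroup V] [inst2 : Module ℝ V],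
      ∀ N F : Seminorm ℝ V, (∀ T : V, F T ≤ N T) →
      ∀ κ : ℝ, 0 ≤ κ →
      ∀ ω : ℕ → V →ₗ[ℝ] ℝ,
      (∀ (n : ℕ) (T : V),
        |ω n T| ≤ 2 ^ (-(n : ℝ) * (α - β)) * κ * N T ^ (1 - β) * F T ^ β) →
      (∀ (n : ℕ) (T : V), |ω n T| ≤ 2 ^ (-(n : ℝ) * α) * κ * N T) →
      ∀ T : V, (Summable fun n => ω n T) ∧
        |∑' n, ω n T| ≤ C * N T ^ (1 - α) * F T ^ α * κ := by
  have h2 : (0:ℝ) < 2 := two_pos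
  have hxgt1 : (1:ℝ) < 2 ^ (β - α) :=
    Real.one_lt_rpow_iff_of_pos two_pos |>.mpr (Or.inl ⟨one_lt_two, by linarith⟩)
  have hylt1 : (2:ℝ) ^ (-α) < 1 :=
    Real.rpow_lt_one_of_one_lt_of_neg one_lt_two (by linarith)
  have hy0 : (0:ℝ) < 2 ^ (-α) := Real.rpow_pos_of_pos two_pos _
  set C : ℝ := (2 ^ (β - α) - 1)⁻¹ + 2 ^ α / (1 - 2 ^ (-α)) with hC
  have hCpos : 0 < C := by
    apply add_pos (inv_pos.mpr (by linarith))
    exact div_pos (Real.rpow_pos_of_pos two_pos _) (by linarith)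
  refine ⟨C, hCpos, ?_⟩
  intro V _ _ N F hFN κ hκ ω hω1 hω2 T
  set a := N T with ha
  set b := F T with hb
  have ha0 : 0 ≤ a := apply_nonneg N T
  have hb0 : 0 ≤ b := apply_nonneg F T
  have hba : b ≤ a := hFN T
  -- summability via second bound
  have hgeo : Summable fun n : ℕ => ((2:ℝ) ^ (-α)) ^ n * (κ * a) := by
    exact (summable_geometric_of_lt_one hy0.le hylt1).mul_right _
  have hpow1 : ∀ n : ℕ, (2:ℝ) ^ (-(n:ℝ) * α) = ((2:ℝ) ^ (-α)) ^ n := by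
    intro n
    rw [← Real.rpow_natCast ((2:ℝ) ^ (-α)) n, ← Real.rpow_mul (by norm_num : (0:ℝ) ≤ 2)]
    congr 1; ring
  have hpow2 : ∀ n : ℕ, (2:ℝ) ^ (-(n:ℝ) * (α - β)) = ((2:ℝ) ^ (β - α)) ^ n := by
    intro n
    rw [← Real.rpow_natCast ((2:ℝ) ^ (β - α)) n, ← Real.rpow_mul (by norm_num : (0:ℝ) ≤ 2)]
    congr 1; ring
  have key : ∀ n : ℕ, |ω n T| ≤ ((2:ℝ) ^ (-α)) ^ n * (κ * a) := by
    intro n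
    have := hω2 n T
    rw [hpow1 n] at this
    linarith [this]
  have habs : Summable fun n => |ω n T| :=
    hgeo.of_nonneg_of_le (fun n => abs_nonneg _) key
  have hsum : Summable fun n => ω n T := by
    refine Summable.of_norm ?_
    simpa [Real.norm_eq_abs] using habs
  refine ⟨hsum, ?_⟩
  have h1 : |∑' n, ω n T| ≤ ∑' n, |ω n T| := by
    simpa [Real.norm_eq_abs] using
      norm_tsum_le_tsum_norm (f := fun n => ω n T) (by simpa [Real.norm_eq_abs] using habs)
  rcases eq_or_lt_of_le hb0 with hbz | hbpos
  · -- F T = 0 : every term vanishes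
    have hzero : ∀ n : ℕ, ω n T = 0 := by
      intro n
      have h := hω1 n T
      rw [← hb, ← hbz, Real.zero_rpow (by linarith : β ≠ 0), mul_zero] at h
      exact abs_eq_zero.mp (le_antisymm h (abs_nonneg _))
    have : (∑' n, ω n T) = 0 := by simp [hzero]
    rw [this, ← hbz, Real.zero_rpow (ne_of_gt hα)]
    simp
  · -- F T > 0
    have hapos : 0 < a := lt_of_lt_of_le hbpos hba
    set r : ℝ := b / a with hr
    have hrpos : 0 < r := div_pos hbpos hapos
    have hr1 : r ≤ 1 := (div_le_one hapos).mpr hba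
    obtain ⟨M, hM1, hM2⟩ := split_point hrpos hr1
    -- identities
    have e1 : a ^ (β - α) * a ^ (1 - β) = a ^ (1 - α) := by
      rw [← Real.rpow_add hapos]; congr 1; ring
    have e2 : b ^ β / b ^ (β - α) = b ^ α := by
      rw [← Real.rpow_sub hbpos]; congr 1; ring
    have e3 : a / a ^ α = a ^ (1 - α) := by
      rw [Real.rpow_sub hapos, Real.rpow_one]
    have hA : (a / b) ^ (β - α) * (a ^ (1 - β) * b ^ β) = a ^ (1 - α) * b ^ α := by
      rw [Real.div_rpow hapos.le hbpos.le]
      calc a ^ (β - α) / b ^ (β - α) * (a ^ (1 - β) * b ^ β)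
          = (a ^ (β - α) * a ^ (1 - β)) * (b ^ β / b ^ (β - α)) := by ring
        _ = a ^ (1 - α) * b ^ α := by rw [e1, e2]
    have hB : (2 * r) ^ α * a = 2 ^ α * (a ^ (1 - α) * b ^ α) := by
      rw [Real.mul_rpow (by norm_num) hrpos.le, hr, Real.div_rpow hbpos.le hapos.le]
      have : b ^ α / a ^ α * a = b ^ α * (a / a ^ α) := by ring
      rw [mul_assoc, this, e3]; ring
    -- split the sum
    have hsplit := Summable.sum_add_tsum_nat_add (f := fun n => |ω n T|) M habs
    -- head estimate
    have hhead : ∑ i ∈ Finset.range M, |ω i T|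
        ≤ (2 ^ (β - α) - 1)⁻¹ * (a ^ (1 - α) * b ^ α) * κ := by
      have step1 : ∑ i ∈ Finset.range M, |ω i T|
          ≤ (∑ i ∈ Finset.range M, ((2:ℝ) ^ (β - α)) ^ i) * (κ * (a ^ (1 - β) * b ^ β)) := by
        rw [Finset.sum_mul]
        refine Finset.sum_le_sum fun i _ => ?_
        have := hω1 i T
        rw [hpow2 i] at this
        calc |ω i T| ≤ ((2:ℝ) ^ (β - α)) ^ i * κ * a ^ (1 - β) * b ^ β := this
          _ = ((2:ℝ) ^ (β - α)) ^ i * (κ * (a ^ (1 - β) * b ^ β)) := by ring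
      have hgs : ∑ i ∈ Finset.range M, ((2:ℝ) ^ (β - α)) ^ i
          ≤ ((2:ℝ) ^ (β - α)) ^ M / (2 ^ (β - α) - 1) := by
        rw [geom_sum_eq (ne_of_gt hxgt1)]
        have hd : (0:ℝ) < 2 ^ (β - α) - 1 := by linarith
        exact (div_le_div_iff_of_pos_right hd).mpr
          (by linarith [pow_nonneg (le_of_lt (lt_trans one_pos hxgt1)) M])
      -- bound (2^(β-α))^M by (a/b)^(β-α)
      have h2M : (2:ℝ) ^ ((M:ℝ)) ≤ r⁻¹ := by
        rw [Real.rpow_neg (by norm_num : (0:ℝ) ≤ 2)] at hM2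
        exact (le_inv_comm₀ hrpos (by positivity)).mp hM2
      have hxM : ((2:ℝ) ^ (β - α)) ^ M ≤ (a / b) ^ (β - α) := by
        have hc1 : ((2:ℝ) ^ (β - α)) ^ M = ((2:ℝ) ^ ((M:ℝ))) ^ (β - α) := by
          rw [← Real.rpow_natCast ((2:ℝ) ^ (β - α)) M, ← Real.rpow_mul (by norm_num : (0:ℝ) ≤ 2),
            ← Real.rpow_mul (by norm_num : (0:ℝ) ≤ 2)]
          congr 1; ring
        have hinv : r⁻¹ = a / b := by rw [hr, inv_div]
        rw [hc1, ← hinv]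
        exact Real.rpow_le_rpow (by positivity) h2M (by linarith)
      have hnn : (0:ℝ) ≤ κ * (a ^ (1 - β) * b ^ β) := by positivity
      have hd : (0:ℝ) < 2 ^ (β - α) - 1 := by linarith
      calc ∑ i ∈ Finset.range M, |ω i T|
          ≤ (∑ i ∈ Finset.range M, ((2:ℝ) ^ (β - α)) ^ i) * (κ * (a ^ (1 - β) * b ^ β)) := step1
        _ ≤ (((2:ℝ) ^ (β - α)) ^ M / (2 ^ (β - α) - 1)) * (κ * (a ^ (1 - β) * b ^ β)) :=
            mul_le_mul_of_nonneg_right hgs hnn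
        _ ≤ ((a / b) ^ (β - α) / (2 ^ (β - α) - 1)) * (κ * (a ^ (1 - β) * b ^ β)) :=
            mul_le_mul_of_nonneg_right ((div_le_div_iff_of_pos_right hd).mpr hxM) hnn
        _ = (2 ^ (β - α) - 1)⁻¹ * ((a / b) ^ (β - α) * (a ^ (1 - β) * b ^ β)) * κ := by ring
        _ = (2 ^ (β - α) - 1)⁻¹ * (a ^ (1 - α) * b ^ α) * κ := by rw [hA]
    -- tail estimate
    have htail : ∑' i, |ω (i + M) T|
        ≤ 2 ^ α / (1 - 2 ^ (-α)) * (a ^ (1 - α) * b ^ α) * κ := by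
      have hkey2 : ∀ i : ℕ, |ω (i + M) T|
          ≤ ((2:ℝ) ^ (-α)) ^ M * (((2:ℝ) ^ (-α)) ^ i * (κ * a)) := by
        intro i
        have h := key (i + M)
        rw [pow_add] at h
        calc |ω (i + M) T| ≤ ((2:ℝ) ^ (-α)) ^ i * ((2:ℝ) ^ (-α)) ^ M * (κ * a) := h
          _ = ((2:ℝ) ^ (-α)) ^ M * (((2:ℝ) ^ (-α)) ^ i * (κ * a)) := by ring
      have hsummg : Summable fun i : ℕ => ((2:ℝ) ^ (-α)) ^ M * (((2:ℝ) ^ (-α)) ^ i * (κ * a)) :=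
        hgeo.mul_left _
      have habs' : Summable fun i : ℕ => |ω (i + M) T| :=
        (summable_nat_add_iff M).mpr habs
      have hts := Summable.tsum_le_tsum hkey2 habs' hsummg
      have hval : ∑' i : ℕ, ((2:ℝ) ^ (-α)) ^ M * (((2:ℝ) ^ (-α)) ^ i * (κ * a))
          = ((2:ℝ) ^ (-α)) ^ M * ((1 - 2 ^ (-α))⁻¹ * (κ * a)) := by
        rw [tsum_mul_left, tsum_mul_right, tsum_geometric_of_lt_one hy0.le hylt1]
      have hM' : (2:ℝ) ^ (-(M:ℝ)) ≤ 2 * r := by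
        have he : 2 * (2:ℝ) ^ (-((M:ℝ) + 1)) = (2:ℝ) ^ (-(M:ℝ)) := by
          rw [show (-(M:ℝ)) = 1 + (-((M:ℝ) + 1)) by ring,
            Real.rpow_add (by norm_num : (0:ℝ) < 2), Real.rpow_one]
        have := mul_le_mul_of_nonneg_left hM1 (by norm_num : (0:ℝ) ≤ 2)
        linarith
      have hyM : ((2:ℝ) ^ (-α)) ^ M ≤ (2 * r) ^ α := by
        have hc1 : ((2:ℝ) ^ (-α)) ^ M = ((2:ℝ) ^ (-(M:ℝ))) ^ α := by
          rw [← Real.rpow_natCast ((2:ℝ) ^ (-α)) M, ← Real.rpow_mul (by norm_num : (0:ℝ) ≤ 2),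
            ← Real.rpow_mul (by norm_num : (0:ℝ) ≤ 2)]
          congr 1; ring
        rw [hc1]
        exact Real.rpow_le_rpow (by positivity) hM' hα.le
      have hnn2 : (0:ℝ) ≤ (1 - 2 ^ (-α))⁻¹ * (κ * a) := by
        apply mul_nonneg (inv_nonneg.mpr (by linarith)) (mul_nonneg hκ ha0)
      calc ∑' i, |ω (i + M) T|
          ≤ ((2:ℝ) ^ (-α)) ^ M * ((1 - 2 ^ (-α))⁻¹ * (κ * a)) := by rw [← hval]; exact hts
        _ ≤ (2 * r) ^ α * ((1 - 2 ^ (-α))⁻¹ * (κ * a)) :=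
            mul_le_mul_of_nonneg_right hyM hnn2
        _ = (1 - 2 ^ (-α))⁻¹ * κ * ((2 * r) ^ α * a) := by ring
        _ = (1 - 2 ^ (-α))⁻¹ * κ * (2 ^ α * (a ^ (1 - α) * b ^ α)) := by rw [hB]
        _ = 2 ^ α / (1 - 2 ^ (-α)) * (a ^ (1 - α) * b ^ α) * κ := by ring
    calc |∑' n, ω n T| ≤ ∑' n, |ω n T| := h1
      _ = ∑ i ∈ Finset.range M, |ω i T| + ∑' i, |ω (i + M) T| := hsplit.symm
      _ ≤ (2 ^ (β - α) - 1)⁻¹ * (a ^ (1 - α) * b ^ α) * κ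
          + 2 ^ α / (1 - 2 ^ (-α)) * (a ^ (1 - α) * b ^ α) * κ := add_le_add hhead htail
      _ = C * a ^ (1 - α) * b ^ α * κ := by rw [hC]; ring
end
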